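/- There is a family ℋ of at most ℵ₁ many dense subsets of P(T) such that for every filter G on P(T) meeting each member of ℋ: the relation <* = ⋃{<ₚ : p ∈ G} makes V = ⋃{vᵖ : p ∈ G} an Aronszajn tree, and f = ⋃{fᵖ : p ∈ G} is a weak embedding from T into (V, <*) whose values satisfy ht(f(ρ)) = lg(ρ) for every ρ ∈ T. -/

import Mathlib

universe u

open Cardinal Ordinal Set Classical

noncomputable def omega1 : Ordinal.{u} := (Cardinal.aleph 1).ord

/-- The ordinal below `ω₁` coded by an element of `omega1.toType`. -/
noncomputable def oVal (γ : omega1.{0}.ToType) : Ordinal.{0} :=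
  ((Ordinal.ToType.mk (o := omega1.{0})).symm γ : Set.Iio omega1.{0})

/-- `ht γ`: the unique `α` with `ω·α ≤ γ < ω·α + ω`, i.e. `γ / ω`. -/
noncomputable def htOf (γ : omega1.{0}.ToType) : Ordinal.{0} := oVal γ / Ordinal.omega0

/-- Codes for the nodes of `T`: partial functions on `ω₁` with values in `ω₁`,
representing functions `ρ : β → ω₁` for countable ordinals `β = lg ρ`. -/
abbrev Sseq : Type := omega1.{0}.ToType → Option omega1.{0}.ToType

/-- A code is a genuine sequence if its domain is a proper initial segment of `ω₁`. -/
def IsSeqOK (ρ : Sseq) : Prop :=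
  (∀ ξ η : omega1.{0}.ToType, ξ < η → ρ η ≠ none → ρ ξ ≠ none) ∧ ∃ ξ, ρ ξ = none

/-- The length of a sequence: the least point where it is undefined. -/
noncomputable def lg (ρ : Sseq) : Ordinal.{0} := sInf (oVal '' {ξ | ρ ξ = none})

/-- The (non-strict) extension order on sequences. -/
def seqLE (ρ τ : Sseq) : Prop := ∀ ξ a, ρ ξ = some a → τ ξ = some a

/-- The strict extension order on sequences. -/
def seqLT (ρ τ : Sseq) : Prop := seqLE ρ τ ∧ ρ ≠ τ

/-- `ρ ∩ τ`: the longest common initial segment of `ρ` and `τ`. -/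
noncomputable def meetSeq (ρ τ : Sseq) : Sseq :=
  fun ξ => if ∀ η, η ≤ ξ → ρ η = τ η then ρ ξ else none

/-- The restriction of `ρ` to the initial segment below `b`. -/
noncomputable def restrictSeq (ρ : Sseq) (b : omega1.{0}.ToType) : Sseq :=
  fun ξ => if ξ < b then ρ ξ else none

/-- The empty sequence. -/
def emptySeq : Sseq := fun _ => none

/-- The ambient tree `T` of the forcing `P(T)`: a set of sequences of countable length,
containing the empty sequence, closed under restrictions to initial segments, of
cardinality `ℵ₁`, ordered by strict extension, with no uncountable chain. -/
def PAmbientOK (Tc : Set Sseq) : Prop :=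
  (∀ ρ ∈ Tc, IsSeqOK ρ) ∧
  emptySeq ∈ Tc ∧
  (∀ ρ ∈ Tc, ∀ b : omega1.{0}.ToType, restrictSeq ρ b ∈ Tc) ∧
  Cardinal.mk Tc = Cardinal.aleph.{0} 1 ∧
  ∀ C ⊆ Tc, (∀ ρ ∈ C, ∀ τ ∈ C, ρ ≠ τ → seqLE ρ τ ∨ seqLE τ ρ) → C.Countable

/-- A condition of the forcing `P(T)`. -/
structure PCond : Type where
  u : Finset Sseq
  v : Finset omega1.{0}.ToType
  lt : omega1.{0}.ToType → omega1.{0}.ToType → Prop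
  f : Sseq → Option omega1.{0}.ToType
  c : omega1.{0}.ToType → Option ℕ

/-- The requirements making `p` a condition of `P(T)`. -/
structure PValid (Tc : Set Sseq) (p : PCond) : Prop where
  u_sub : ∀ ρ ∈ p.u, ρ ∈ Tc
  u_root : emptySeq ∈ p.u
  u_meet : ∀ ρ ∈ p.u, ∀ τ ∈ p.u, meetSeq ρ τ ∈ p.u
  lt_dom : ∀ a b, p.lt a b → a ∈ p.v ∧ b ∈ p.v
  lt_irrefl : ∀ a, ¬ p.lt a a
  lt_trans : ∀ a b c, p.lt a b → p.lt b c → p.lt a c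
  lt_ht : ∀ a b, p.lt a b → htOf a < htOf b
  lt_pred_linear : ∀ a b c, p.lt a c → p.lt b c → p.lt a b ∨ p.lt b a ∨ a = b
  f_dom : ∀ ρ : Sseq, p.f ρ ≠ none ↔ ρ ∈ p.u
  f_ran : ∀ ρ a, p.f ρ = some a → a ∈ p.v
  f_surj : ∀ a ∈ p.v, ∃ ρ ∈ p.u, p.f ρ = some a
  f_mono : ∀ ρ ∈ p.u, ∀ τ ∈ p.u, seqLT ρ τ →
    ∀ a b, p.f ρ = some a → p.f τ = some b → p.lt a b
  f_ht : ∀ ρ a, p.f ρ = some a → htOf a = lg ρ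
  c_dom : ∀ a, p.c a ≠ none ↔ a ∈ p.v
  c_spec : ∀ a b, p.lt a b → p.c a ≠ p.c b

/-- The extension order of `P(T)`. -/
def PLe (p q : PCond) : Prop :=
  p.u ⊆ q.u ∧ p.v ⊆ q.v ∧ (∀ a b, p.lt a b → q.lt a b) ∧
  (∀ ρ a, p.f ρ = some a → q.f ρ = some a) ∧
  ∀ a n, p.c a = some n → q.c a = some n


/-- `lt` is a strict partial order with field inside `A`. -/
def StrictOrderOn {X : Type*} (A : Set X) (lt : X → X → Prop) : Prop :=
  (∀ x y, lt x y → x ∈ A ∧ y ∈ A) ∧ (∀ x, ¬ lt x x) ∧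
    ∀ x y z, lt x y → lt y z → lt x z

/-- `lt` is a tree order on `A`: a strict partial order whose sets of strict
predecessors are well-ordered. -/
def TreeOrderOn {X : Type*} (A : Set X) (lt : X → X → Prop) : Prop :=
  StrictOrderOn A lt ∧
  (∀ x ∈ A, ∀ y z, lt y x → lt z x → lt y z ∨ lt z y ∨ y = z) ∧
  ∀ x ∈ A, Set.WellFoundedOn {y | lt y x} lt

/-- The height of `x`: the order type of its set of strict `lt`-predecessors. -/
noncomputable def relHeight {X : Type u} (lt : X → X → Prop) (x : X) : Ordinal.{u} :=
  if h : IsWellOrder {y : X // lt y x} (fun a b => lt a.1 b.1) then @Ordinal.type _ _ h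
  else 0

/-- `(A, lt)` is an Aronszajn tree: a tree of height `ω₁` with countable levels and no
uncountable chain. -/
def AronszajnOn {X : Type u} (A : Set X) (lt : X → X → Prop) : Prop :=
  TreeOrderOn A lt ∧
  (∀ α : Ordinal.{u}, α < omega1.{u} → ∃ x ∈ A, relHeight lt x = α) ∧
  (∀ x ∈ A, relHeight lt x < omega1.{u}) ∧
  (∀ α : Ordinal.{u}, {x ∈ A | relHeight lt x = α}.Countable) ∧
  ∀ C ⊆ A, (∀ x ∈ C, ∀ y ∈ C, x ≠ y → lt x y ∨ lt y x) → C.Countable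


/-!
A condition can be extended to contain any given `ρ ∈ T`: one adds the missing meets of `ρ`
with the nodes already present, shortest first, so that `uᵖ` stays closed under meets. A new
node `σ` that lies below some node of `uᵖ` is mapped below the image `b₀` of its least extension
`τ₀`: to the point of height `lg σ` below `b₀` if there is one (a fresh point there would break
the linearity of the predecessors of `b₀`), otherwise to a fresh point of `ω₁` of height `lg σ`
spliced into the branch of `b₀`. A new maximal node becomes a fresh leaf above the image of its
longest predecessor. Colours are always chosen fresh.

In a filter meeting all these dense sets, `f` is total on `T`, and `f(ρ)` has the predecessors
`f(ρ ↾ β)` at every height `β < lg ρ`; predecessors being linearly ordered and strictly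
increasing in `htOf`, the tree height of every point of `V` is its `htOf`. Hence the levels
are countable, because `htOf` has countable fibres, and so are the chains, because the colourings
`cᵖ` combine into a colouring with values in `ℕ` that is injective on chains.
-/

section Ordinals

lemma oVal_strictMono : StrictMono oVal := fun _ _ h =>
  (Subtype.coe_lt_coe (p := (· ∈ Set.Iio omega1.{0}))).2
    (Ordinal.ToType.mk.symm.strictMono h)

lemma oVal_lt_omega1 (γ : omega1.{0}.ToType) : oVal γ < omega1 := (Ordinal.ToType.mk.symm γ).2

lemma exists_oVal_eq {o : Ordinal.{0}} (ho : o < omega1) : ∃ γ, oVal γ = o :=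
  ⟨Ordinal.ToType.mk ⟨o, ho⟩, by simp [oVal]⟩

lemma lt_omega1_iff {o : Ordinal.{0}} : o < omega1 ↔ o.card ≤ ℵ₀ := by
  rw [omega1, Cardinal.lt_ord, ← Order.lt_succ_iff, Cardinal.succ_aleph0]

lemma htOf_lt_omega1 (γ : omega1.{0}.ToType) : htOf γ < omega1 :=
  (Ordinal.div_le_of_le_mul (Ordinal.le_mul_right _ Ordinal.omega0_pos)).trans_lt
    (oVal_lt_omega1 γ)

lemma htOf_eq_iff {γ : omega1.{0}.ToType} {β : Ordinal.{0}} :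
    htOf γ = β ↔ ∃ n : ℕ, oVal γ = Ordinal.omega0 * β + n := by
  constructor
  · rintro rfl
    obtain ⟨n, hn⟩ := Ordinal.lt_omega0.1 (Ordinal.mod_lt (oVal γ) Ordinal.omega0_ne_zero)
    exact ⟨n, by rw [← hn, htOf, Ordinal.div_add_mod]⟩
  · rintro ⟨n, hn⟩
    rw [htOf, hn, Ordinal.mul_add_div _ Ordinal.omega0_ne_zero,
      Ordinal.div_eq_zero_of_lt (Ordinal.natCast_lt_omega0 n), add_zero]

lemma countable_setOf_htOf_eq (β : Ordinal.{0}) :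
    {γ : omega1.{0}.ToType | htOf γ = β}.Countable := by
  refine Set.MapsTo.countable_of_injOn (f := oVal)
    (t := Set.range fun n : ℕ => Ordinal.omega0 * β + n) (fun γ hγ => ?_)
    oVal_strictMono.injective.injOn (Set.countable_range _)
  obtain ⟨n, hn⟩ := htOf_eq_iff.1 hγ
  exact ⟨n, hn.symm⟩

lemma exists_htOf_eq_notMem {β : Ordinal.{0}} (hβ : β < omega1)
    (v : Finset omega1.{0}.ToType) : ∃ a, htOf a = β ∧ a ∉ v := by
  have hlt (n : ℕ) : Ordinal.omega0 * β + n < omega1 := by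
    rw [lt_omega1_iff] at hβ ⊢
    simp only [Ordinal.card_add, Ordinal.card_mul, Ordinal.card_omega0, Ordinal.card_nat]
    calc ℵ₀ * β.card + n ≤ ℵ₀ * ℵ₀ + ℵ₀ := by gcongr; exact Cardinal.natCast_lt_aleph0.le
      _ = ℵ₀ := by simp
  choose g hg using fun n => exists_oVal_eq (hlt n)
  have hg_inj : Function.Injective g := fun m n h => by
    exact_mod_cast add_left_cancel ((hg m).symm.trans (h ▸ hg n))
  obtain ⟨_, ⟨n, rfl⟩, hn⟩ :=
    Set.not_subset.1 fun h => Set.infinite_range_of_injective hg_inj (v.finite_toSet.subset h)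
  exact ⟨g n, htOf_eq_iff.2 ⟨n, hg n⟩, hn⟩

end Ordinals

section Sequences

lemma seqLE_refl (ρ : Sseq) : seqLE ρ ρ := fun _ _ h => h

lemma seqLE_trans {ρ τ χ : Sseq} (h₁ : seqLE ρ τ) (h₂ : seqLE τ χ) : seqLE ρ χ :=
  fun ξ a h => h₂ ξ a (h₁ ξ a h)

lemma seqLE_antisymm {ρ τ : Sseq} (h₁ : seqLE ρ τ) (h₂ : seqLE τ ρ) : ρ = τ := by
  funext ξ
  cases hρ : ρ ξ with
  | some a => exact (h₁ ξ a hρ).symm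
  | none => cases hτ : τ ξ with
    | some a => simpa [hρ] using h₂ ξ a hτ
    | none => rfl

lemma seqLT_of_seqLT_of_seqLE {ρ σ τ : Sseq} (h₁ : seqLT ρ σ) (h₂ : seqLE σ τ) : seqLT ρ τ :=
  ⟨seqLE_trans h₁.1 h₂, fun h => h₁.2 (seqLE_antisymm h₁.1 (h ▸ h₂))⟩

lemma lg_le_oVal {ρ : Sseq} {ξ : omega1.{0}.ToType} (h : ρ ξ = none) : lg ρ ≤ oVal ξ :=
  csInf_le' ⟨ξ, h, rfl⟩

lemma IsSeqOK.exists_oVal_eq_lg {ρ : Sseq} (hρ : IsSeqOK ρ) :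
    ∃ ξ, oVal ξ = lg ρ ∧ ρ ξ = none := by
  obtain ⟨ξ, hξ⟩ := hρ.2
  obtain ⟨ζ, hζ, hval⟩ := csInf_mem (s := oVal '' {ξ | ρ ξ = none}) ⟨oVal ξ, ξ, hξ, rfl⟩
  exact ⟨ζ, hval, hζ⟩

lemma IsSeqOK.lg_lt_omega1 {ρ : Sseq} (hρ : IsSeqOK ρ) : lg ρ < omega1 := by
  obtain ⟨ξ, hξ, -⟩ := hρ.exists_oVal_eq_lg
  exact hξ ▸ oVal_lt_omega1 ξ

lemma IsSeqOK.eq_none_iff {ρ : Sseq} (hρ : IsSeqOK ρ) (ξ : omega1.{0}.ToType) :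
    ρ ξ = none ↔ lg ρ ≤ oVal ξ := by
  refine ⟨lg_le_oVal, fun hle => ?_⟩
  obtain ⟨ζ, hζ, hρζ⟩ := hρ.exists_oVal_eq_lg
  rcases (hζ ▸ hle).eq_or_lt with h | h
  · rwa [← oVal_strictMono.injective h]
  · by_contra hne
    exact hρ.1 ζ ξ (oVal_strictMono.lt_iff_lt.1 h) hne hρζ

lemma IsSeqOK.ne_none_iff {ρ : Sseq} (hρ : IsSeqOK ρ) (ξ : omega1.{0}.ToType) :
    ρ ξ ≠ none ↔ oVal ξ < lg ρ := by
  rw [Ne, hρ.eq_none_iff, not_le]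

lemma seqLE_of_lg_le {σ χ ρ : Sseq} (hσ : IsSeqOK σ) (hχ : IsSeqOK χ)
    (hσρ : seqLE σ ρ) (hχρ : seqLE χ ρ) (hlg : lg σ ≤ lg χ) : seqLE σ χ := by
  intro ξ a ha
  obtain ⟨b, hb⟩ := Option.ne_none_iff_exists'.1 <|
    (hχ.ne_none_iff ξ).2 (((hσ.ne_none_iff ξ).1 (by simp [ha])).trans_le hlg)
  rw [hb, ← hχρ ξ b hb, hσρ ξ a ha]

lemma eq_of_seqLE_of_lg_le {ρ τ : Sseq} (hρ : IsSeqOK ρ) (hτ : IsSeqOK τ)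
    (h : seqLE ρ τ) (hlg : lg τ ≤ lg ρ) : ρ = τ :=
  seqLE_antisymm h (seqLE_of_lg_le hτ hρ (seqLE_refl τ) h hlg)

lemma lg_lt_lg_of_seqLT {ρ τ : Sseq} (hρ : IsSeqOK ρ) (hτ : IsSeqOK τ) (h : seqLT ρ τ) :
    lg ρ < lg τ :=
  lt_of_not_ge fun hlg => h.2 (eq_of_seqLE_of_lg_le hρ hτ h.1 hlg)

lemma emptySeq_seqLT {σ : Sseq} (h : σ ≠ emptySeq) : seqLT emptySeq σ :=
  ⟨fun _ _ ha => by simp [emptySeq] at ha, fun he => h he.symm⟩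

lemma restrictSeq_seqLE (ρ : Sseq) (b : omega1.{0}.ToType) : seqLE (restrictSeq ρ b) ρ := by
  intro ξ a h
  by_cases hξ : ξ < b <;> simp_all [restrictSeq]

lemma IsSeqOK.restrict {ρ : Sseq} (hρ : IsSeqOK ρ) (b : omega1.{0}.ToType) :
    IsSeqOK (restrictSeq ρ b) := by
  refine ⟨fun ξ η hξη hη => ?_, b, by simp [restrictSeq]⟩
  by_cases hηb : η < b
  · simpa [restrictSeq, hξη.trans hηb] using hρ.1 ξ η hξη (by simpa [restrictSeq, hηb] using hη)
  · simp [restrictSeq, hηb] at hη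

lemma IsSeqOK.restrict_eq_self {ρ : Sseq} (hρ : IsSeqOK ρ) {b : omega1.{0}.ToType}
    (hb : lg ρ ≤ oVal b) : restrictSeq ρ b = ρ := by
  funext ξ
  by_cases hξ : ξ < b
  · simp [restrictSeq, hξ]
  · simpa [restrictSeq, hξ, eq_comm] using
      (hρ.eq_none_iff ξ).2 (hb.trans (oVal_strictMono.monotone (not_lt.1 hξ)))

lemma IsSeqOK.lg_restrict {ρ : Sseq} (hρ : IsSeqOK ρ) {b : omega1.{0}.ToType}
    (hb : oVal b ≤ lg ρ) : lg (restrictSeq ρ b) = oVal b := by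
  refine (lg_le_oVal (by simp [restrictSeq])).antisymm (not_lt.1 fun hlt => ?_)
  obtain ⟨ξ, hξ, hnone⟩ := (hρ.restrict b).exists_oVal_eq_lg
  have hξb : ξ < b := oVal_strictMono.lt_iff_lt.1 (hξ ▸ hlt)
  have : oVal b ≤ oVal ξ := hb.trans (lg_le_oVal (by simpa [restrictSeq, hξb] using hnone))
  exact (hξ ▸ hlt).not_ge this

lemma meetSeq_seqLE_left (ρ τ : Sseq) : seqLE (meetSeq ρ τ) ρ := by
  intro ξ a h
  simp only [meetSeq] at h
  split at h
  · exact h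
  · simp at h

lemma meetSeq_comm (ρ τ : Sseq) : meetSeq ρ τ = meetSeq τ ρ := by
  funext ξ
  simp only [meetSeq]
  by_cases h : ∀ η, η ≤ ξ → ρ η = τ η
  · rw [if_pos h, if_pos fun η hη => (h η hη).symm, h ξ le_rfl]
  · rw [if_neg h, if_neg fun h' => h fun η hη => (h' η hη).symm]

lemma meetSeq_self (ρ : Sseq) : meetSeq ρ ρ = ρ := by
  funext ξ
  simp [meetSeq]

lemma seqLE_meetSeq {σ ρ τ : Sseq} (hσ : IsSeqOK σ) (hρ : seqLE σ ρ) (hτ : seqLE σ τ) :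
    seqLE σ (meetSeq ρ τ) := by
  intro ξ a ha
  rw [meetSeq, if_pos, hρ ξ a ha]
  intro η hη
  obtain ⟨e, he⟩ := Option.ne_none_iff_exists'.1 <| show σ η ≠ none by
    rcases hη.eq_or_lt with rfl | hlt
    · simp [ha]
    · exact hσ.1 η ξ hlt (by simp [ha])
  rw [hρ η e he, hτ η e he]

lemma meetSeq_eq_left {σ ρ : Sseq} (hσ : IsSeqOK σ) (h : seqLE σ ρ) : meetSeq σ ρ = σ :=
  seqLE_antisymm (meetSeq_seqLE_left σ ρ) (seqLE_meetSeq hσ (seqLE_refl σ) h)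

lemma IsSeqOK.meet_eq_restrict {ρ : Sseq} (hρ : IsSeqOK ρ) (τ : Sseq) :
    ∃ b, meetSeq ρ τ = restrictSeq ρ b := by
  by_cases hd : ∃ ξ, ρ ξ ≠ τ ξ
  · obtain ⟨b, hb, hmin⟩ := WellFounded.has_min wellFounded_lt {ξ | ρ ξ ≠ τ ξ} hd
    refine ⟨b, funext fun ξ => ?_⟩
    by_cases hξ : ξ < b
    · rw [meetSeq, restrictSeq, if_pos hξ, if_pos fun η hη => not_not.1 fun hne =>
        hmin η hne (hη.trans_lt hξ)]
    · rw [meetSeq, restrictSeq, if_neg hξ, if_neg fun h => hb (h b (not_lt.1 hξ))]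
  · push Not at hd
    obtain ⟨b, hb⟩ := hρ.2
    rw [← funext hd, meetSeq_self]
    exact ⟨b, (hρ.restrict_eq_self (lg_le_oVal hb)).symm⟩

lemma IsSeqOK.meet {ρ : Sseq} (hρ : IsSeqOK ρ) (τ : Sseq) : IsSeqOK (meetSeq ρ τ) := by
  obtain ⟨b, hb⟩ := hρ.meet_eq_restrict τ
  exact hb ▸ hρ.restrict b

end Sequences

section Conditions

variable {Tc : Set Sseq} {p q : PCond}

lemma PAmbientOK.isSeqOK (hT : PAmbientOK Tc) {ρ : Sseq} (hρ : ρ ∈ Tc) : IsSeqOK ρ := hT.1 ρ hρ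

lemma PAmbientOK.restrictSeq_mem (hT : PAmbientOK Tc) {ρ : Sseq} (hρ : ρ ∈ Tc)
    (b : omega1.{0}.ToType) : restrictSeq ρ b ∈ Tc :=
  hT.2.2.1 ρ hρ b

lemma PValid.isSeqOK (hT : PAmbientOK Tc) (hp : PValid Tc p) {ρ : Sseq} (hρ : ρ ∈ p.u) :
    IsSeqOK ρ :=
  hT.isSeqOK (hp.u_sub ρ hρ)

lemma PValid.exists_f_eq_some (hp : PValid Tc p) {ρ : Sseq} (hρ : ρ ∈ p.u) :
    ∃ a, p.f ρ = some a :=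
  Option.ne_none_iff_exists'.1 ((hp.f_dom ρ).2 hρ)

lemma PValid.mem_u_of_f_eq_some (hp : PValid Tc p) {ρ : Sseq} {a : omega1.{0}.ToType}
    (h : p.f ρ = some a) : ρ ∈ p.u :=
  (hp.f_dom ρ).1 (by simp [h])

lemma PLe.refl (p : PCond) : PLe p p :=
  ⟨subset_rfl, subset_rfl, fun _ _ h => h, fun _ _ h => h, fun _ _ h => h⟩

lemma PLe.trans {r : PCond} (h₁ : PLe p q) (h₂ : PLe q r) : PLe p r :=
  ⟨h₁.1.trans h₂.1, h₁.2.1.trans h₂.2.1, fun a b h => h₂.2.2.1 a b (h₁.2.2.1 a b h),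
    fun ρ a h => h₂.2.2.2.1 ρ a (h₁.2.2.2.1 ρ a h),
    fun a n h => h₂.2.2.2.2 a n (h₁.2.2.2.2 a n h)⟩

lemma PLe.lt {a b : omega1.{0}.ToType} (h : PLe p q) (hab : p.lt a b) : q.lt a b :=
  h.2.2.1 a b hab

lemma PLe.f_eq {ρ : Sseq} {a : omega1.{0}.ToType} (h : PLe p q) (hρ : p.f ρ = some a) :
    q.f ρ = some a :=
  h.2.2.2.1 ρ a hρ

lemma PLe.c_eq {a : omega1.{0}.ToType} {n : ℕ} (h : PLe p q) (ha : p.c a = some n) :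
    q.c a = some n :=
  h.2.2.2.2 a n ha

/-- The order-and-colouring part `(vᵖ, <ₚ, cᵖ)` of a condition; irreflexivity follows from
`lt_ht`. -/
structure ColouredOrder (v : Finset omega1.{0}.ToType)
    (lt : omega1.{0}.ToType → omega1.{0}.ToType → Prop) (c : omega1.{0}.ToType → Option ℕ) :
    Prop where
  lt_dom : ∀ a b, lt a b → a ∈ v ∧ b ∈ v
  lt_trans : ∀ a b c, lt a b → lt b c → lt a c
  lt_ht : ∀ a b, lt a b → htOf a < htOf b
  lt_pred_linear : ∀ a b c, lt a c → lt b c → lt a b ∨ lt b a ∨ a = b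
  c_dom : ∀ a, c a ≠ none ↔ a ∈ v
  c_spec : ∀ a b, lt a b → c a ≠ c b

lemma PValid.colouredOrder (hp : PValid Tc p) :
    ColouredOrder p.v p.lt p.c :=
  ⟨hp.lt_dom, hp.lt_trans, hp.lt_ht, hp.lt_pred_linear, hp.c_dom, hp.c_spec⟩

lemma ColouredOrder.lt_irrefl {v lt c} (h : ColouredOrder v lt c) (a : omega1.{0}.ToType) :
    ¬ lt a a :=
  fun ha => (h.lt_ht a a ha).false

lemma ColouredOrder.insert_between {v lt c} (h : ColouredOrder v lt c)
    {a : omega1.{0}.ToType} (ha : a ∉ v) {n : ℕ} (hn : ∀ x ∈ v, c x ≠ some n)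
    {D U : Set omega1.{0}.ToType} (hDv : D ⊆ v) (hUv : U ⊆ v)
    (hD : ∀ x y, lt x y → y ∈ D → x ∈ D) (hU : ∀ y z, y ∈ U → lt y z → z ∈ U)
    (hDU : ∀ x ∈ D, ∀ z ∈ U, lt x z)
    (hD_ht : ∀ x ∈ D, htOf x < htOf a) (hU_ht : ∀ z ∈ U, htOf a < htOf z)
    (hD_linear : ∀ x ∈ D, ∀ y ∈ D, lt x y ∨ lt y x ∨ x = y)
    (hU_pred : ∀ z ∈ U, ∀ x, lt x z → x ∈ D ∨ x ∈ U) :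
    ColouredOrder (insert a v) (fun x y => lt x y ∨ (x = a ∧ y ∈ U) ∨ (x ∈ D ∧ y = a))
      (Function.update c a (some n)) := by
  have hlt_ne (x y) (hxy : lt x y) : x ≠ a ∧ y ≠ a :=
    ⟨fun hx => ha (hx ▸ (h.lt_dom x y hxy).1), fun hy => ha (hy ▸ (h.lt_dom x y hxy).2)⟩
  have hUa : a ∉ U := fun h => ha (hUv h)
  have hDa : a ∉ D := fun h => ha (hDv h)
  constructor
  · rintro x y (hxy | ⟨rfl, hy⟩ | ⟨hx, rfl⟩)
    · exact ⟨Finset.mem_insert_of_mem (h.lt_dom x y hxy).1,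
        Finset.mem_insert_of_mem (h.lt_dom x y hxy).2⟩
    · exact ⟨Finset.mem_insert_self x v, Finset.mem_insert_of_mem (hUv hy)⟩
    · exact ⟨Finset.mem_insert_of_mem (hDv hx), Finset.mem_insert_self y v⟩
  · rintro x y z (hxy | ⟨hx, hy⟩ | ⟨hx, hy⟩) (hyz | ⟨hy', hz⟩ | ⟨hy', hz⟩)
    · exact Or.inl (h.lt_trans x y z hxy hyz)
    · exact absurd hy' (hlt_ne x y hxy).2
    · exact Or.inr (Or.inr ⟨hD x y hxy hy', hz⟩)
    · exact Or.inr (Or.inl ⟨hx, hU y z hy hyz⟩)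
    · exact absurd (hy' ▸ hy) hUa
    · exact absurd (hDU y hy' y hy) (h.lt_irrefl y)
    · exact absurd hy (hlt_ne y z hyz).1
    · exact Or.inl (hDU x hx z hz)
    · exact absurd (hy ▸ hy') hDa
  · rintro x y (hxy | ⟨rfl, hy⟩ | ⟨hx, rfl⟩)
    · exact h.lt_ht x y hxy
    · exact hU_ht y hy
    · exact hD_ht x hx
  · rintro x y z (hxz | ⟨hx, hz⟩ | ⟨hx, hz⟩) (hyz | ⟨hy, hz'⟩ | ⟨hy, hz'⟩)
    · exact (h.lt_pred_linear x y z hxz hyz).imp Or.inl (Or.imp_left Or.inl)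
    · exact (hU_pred z hz' x hxz).elim (fun hx => Or.inl (Or.inr (Or.inr ⟨hx, hy⟩)))
        fun hx => Or.inr (Or.inl (Or.inr (Or.inl ⟨hy, hx⟩)))
    · exact absurd hz' (hlt_ne x z hxz).2
    · exact (hU_pred z hz y hyz).elim (fun hy => Or.inr (Or.inl (Or.inr (Or.inr ⟨hy, hx⟩))))
        fun hy => Or.inl (Or.inr (Or.inl ⟨hx, hy⟩))
    · exact Or.inr (Or.inr (hx.trans hy.symm))
    · exact absurd (hz' ▸ hz) hUa
    · exact absurd hz (hlt_ne y z hyz).2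
    · exact absurd (hz ▸ hz') hUa
    · exact (hD_linear x hx y hy).imp Or.inl (Or.imp_left Or.inl)
  · intro x
    by_cases hx : x = a
    · simp [hx]
    · simp [hx, h.c_dom x]
  · rintro x y (hxy | ⟨rfl, hy⟩ | ⟨hx, rfl⟩)
    · simpa [Function.update_of_ne (hlt_ne x y hxy).1, Function.update_of_ne (hlt_ne x y hxy).2]
        using h.c_spec x y hxy
    · simpa [Function.update_of_ne (show y ≠ x from fun e => hUa (e ▸ hy))] using
        (hn y (hUv hy)).symm
    · simpa [Function.update_of_ne (show x ≠ y from fun e => hDa (e ▸ hx))] using hn x (hDv hx)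

end Conditions

section Extension

variable {Tc : Set Sseq} {p : PCond}

lemma exists_forall_ne_some {α : Type*} (v : Finset α) (c : α → Option ℕ) :
    ∃ n, ∀ x ∈ v, c x ≠ some n := by
  obtain ⟨n, hn⟩ := Infinite.exists_notMem_finset (v.biUnion fun x => (c x).toFinset)
  exact ⟨n, fun x hx hcx => hn (Finset.mem_biUnion.2 ⟨x, hx, by simp [hcx]⟩)⟩

lemma PValid.exists_le_insert (hp : PValid Tc p) {σ : Sseq} (hσT : σ ∈ Tc) (hσu : σ ∉ p.u)
    (hmeet : ∀ τ ∈ p.u, meetSeq σ τ ∈ insert σ p.u) {a : omega1.{0}.ToType}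
    {lt : omega1.{0}.ToType → omega1.{0}.ToType → Prop} {c : omega1.{0}.ToType → Option ℕ}
    (ho : ColouredOrder (insert a p.v) lt c) (hlt : ∀ x y, p.lt x y → lt x y)
    (hc : ∀ x n, p.c x = some n → c x = some n) (ha : htOf a = lg σ)
    (hbelow : ∀ ρ ∈ p.u, seqLT ρ σ → ∀ b, p.f ρ = some b → lt b a)
    (habove : ∀ τ ∈ p.u, seqLT σ τ → ∀ b, p.f τ = some b → lt a b) :
    ∃ q, PValid Tc q ∧ PLe p q ∧ q.u = insert σ p.u := by
  have hne {ρ} (hρ : ρ ∈ p.u) : ρ ≠ σ := fun h => hσu (h ▸ hρ)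
  refine ⟨⟨insert σ p.u, insert a p.v, lt, Function.update p.f σ (some a), c⟩,
    { u_sub := ?_, u_root := ?_, u_meet := ?_, lt_dom := ho.lt_dom, lt_irrefl := ho.lt_irrefl,
      lt_trans := ho.lt_trans, lt_ht := ho.lt_ht, lt_pred_linear := ho.lt_pred_linear,
      f_dom := ?_, f_ran := ?_, f_surj := ?_, f_mono := ?_, f_ht := ?_, c_dom := ho.c_dom,
      c_spec := ho.c_spec },
    ⟨Finset.subset_insert σ p.u, Finset.subset_insert a p.v, hlt,
      fun ρ b hρ => by simpa [Function.update_of_ne (hne (hp.mem_u_of_f_eq_some hρ))] using hρ,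
      hc⟩, rfl⟩
  · intro ρ hρ
    rcases Finset.mem_insert.1 hρ with rfl | hρ
    exacts [hσT, hp.u_sub ρ hρ]
  · exact Finset.mem_insert_of_mem hp.u_root
  · intro ρ hρσ τ hτσ
    rcases Finset.mem_insert.1 hρσ with rfl | hρ <;> rcases Finset.mem_insert.1 hτσ with rfl | hτ
    · simp [meetSeq_self]
    · exact hmeet τ hτ
    · exact meetSeq_comm ρ τ ▸ hmeet ρ hρ
    · exact Finset.mem_insert_of_mem (hp.u_meet ρ hρ τ hτ)
  · intro ρ
    by_cases hρ : ρ = σ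
    · simp [hρ]
    · simp [hρ, hp.f_dom ρ]
  · intro ρ b hρ
    by_cases hρσ : ρ = σ
    · simp_all
    · simpa [hρσ] using Or.inr (hp.f_ran ρ b (by simpa [hρσ] using hρ))
  · intro b hb
    rcases Finset.mem_insert.1 hb with rfl | hb
    · exact ⟨σ, Finset.mem_insert_self σ p.u, by simp⟩
    · obtain ⟨ρ, hρ, hρb⟩ := hp.f_surj b hb
      exact ⟨ρ, Finset.mem_insert_of_mem hρ, by simpa [hne hρ] using hρb⟩
  · intro ρ hρσ τ hτσ hρτ b d hb hd
    rcases Finset.mem_insert.1 hρσ with rfl | hρ <;> rcases Finset.mem_insert.1 hτσ with rfl | hτ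
    · exact absurd rfl hρτ.2
    · simp only [Function.update_self, Option.some_inj, Function.update_of_ne (hne hτ)] at hb hd
      exact hb ▸ habove τ hτ hρτ d hd
    · simp only [Function.update_self, Option.some_inj, Function.update_of_ne (hne hρ)] at hb hd
      exact hd ▸ hbelow ρ hρ hρτ b hb
    · simp only [Function.update_of_ne (hne hρ), Function.update_of_ne (hne hτ)] at hb hd
      exact hlt b d (hp.f_mono ρ hρ τ hτ hρτ b d hb hd)
  · intro ρ b hρ
    by_cases hρσ : ρ = σ
    · simp_all
    · exact hp.f_ht ρ b (by simpa [hρσ] using hρ)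

lemma PValid.exists_le_insert_between (hp : PValid Tc p) {σ : Sseq} (hσT : σ ∈ Tc)
    (hσu : σ ∉ p.u) (hmeet : ∀ τ ∈ p.u, meetSeq σ τ ∈ insert σ p.u) (hσ : lg σ < omega1)
    {D U : Set omega1.{0}.ToType} (hDv : D ⊆ p.v) (hUv : U ⊆ p.v)
    (hD : ∀ x y, p.lt x y → y ∈ D → x ∈ D) (hU : ∀ y z, y ∈ U → p.lt y z → z ∈ U)
    (hDU : ∀ x ∈ D, ∀ z ∈ U, p.lt x z)
    (hD_ht : ∀ x ∈ D, htOf x < lg σ) (hU_ht : ∀ z ∈ U, lg σ < htOf z)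
    (hD_linear : ∀ x ∈ D, ∀ y ∈ D, p.lt x y ∨ p.lt y x ∨ x = y)
    (hU_pred : ∀ z ∈ U, ∀ x, p.lt x z → x ∈ D ∨ x ∈ U)
    (hbelow : ∀ ρ ∈ p.u, seqLT ρ σ → ∀ b, p.f ρ = some b → b ∈ D)
    (habove : ∀ τ ∈ p.u, seqLT σ τ → ∀ b, p.f τ = some b → b ∈ U) :
    ∃ q, PValid Tc q ∧ PLe p q ∧ q.u = insert σ p.u := by
  obtain ⟨a, ha, hav⟩ := exists_htOf_eq_notMem hσ p.v
  obtain ⟨n, hn⟩ := exists_forall_ne_some p.v p.c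
  refine hp.exists_le_insert hσT hσu hmeet
    (hp.colouredOrder.insert_between hav hn hDv hUv hD hU hDU (ha ▸ hD_ht) (ha ▸ hU_ht)
      hD_linear hU_pred) (fun _ _ h => Or.inl h) (fun x m hx => ?_) ha
    (fun ρ hρ hρσ b hb => Or.inr (Or.inr ⟨hbelow ρ hρ hρσ b hb, rfl⟩))
    (fun τ hτ hστ b hb => Or.inr (Or.inl ⟨rfl, habove τ hτ hστ b hb⟩))
  have hxa : x ≠ a := fun h => hav (h ▸ (hp.c_dom x).1 (by simp [hx]))
  simpa [Function.update_of_ne hxa] using hx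

lemma exists_maximal_seqLT {u : Finset Sseq} (hu : ∀ τ ∈ u, IsSeqOK τ) {σ : Sseq}
    (h : ∃ τ ∈ u, seqLT τ σ) : ∃ τ₁ ∈ u, seqLT τ₁ σ ∧ ∀ τ ∈ u, seqLT τ σ → seqLE τ τ₁ := by
  obtain ⟨τ₁, hτ₁, hmax⟩ := Finset.exists_max_image (u.filter (seqLT · σ)) lg
    (by simpa [Finset.filter_nonempty_iff] using h)
  rw [Finset.mem_filter] at hτ₁
  exact ⟨τ₁, hτ₁.1, hτ₁.2, fun τ hτ hτσ => seqLE_of_lg_le (hu τ hτ) (hu τ₁ hτ₁.1) hτσ.1 hτ₁.2.1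
    (hmax τ (Finset.mem_filter.2 ⟨hτ, hτσ⟩))⟩

lemma exists_minimal_seqLT {u : Finset Sseq} (hu : ∀ τ ∈ u, IsSeqOK τ)
    (hmeet : ∀ ρ ∈ u, ∀ τ ∈ u, meetSeq ρ τ ∈ u) {σ : Sseq} (hσ : IsSeqOK σ) (hσu : σ ∉ u)
    (h : ∃ τ ∈ u, seqLT σ τ) : ∃ τ₀ ∈ u, seqLT σ τ₀ ∧ ∀ τ ∈ u, seqLT σ τ → seqLE τ₀ τ := by
  obtain ⟨τ₀, hτ₀, hmin⟩ := Finset.exists_min_image (u.filter (seqLT σ ·)) lg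
    (by simpa [Finset.filter_nonempty_iff] using h)
  rw [Finset.mem_filter] at hτ₀
  refine ⟨τ₀, hτ₀.1, hτ₀.2, fun τ hτ hστ => ?_⟩
  have hm : meetSeq τ₀ τ ∈ u := hmeet τ₀ hτ₀.1 τ hτ
  have hσm : seqLT σ (meetSeq τ₀ τ) :=
    ⟨seqLE_meetSeq hσ hτ₀.2.1 hστ.1, fun h => hσu (h ▸ hm)⟩
  have hmτ₀ : meetSeq τ₀ τ = τ₀ := eq_of_seqLE_of_lg_le (hu _ hm) (hu τ₀ hτ₀.1)
    (meetSeq_seqLE_left τ₀ τ) (hmin _ (Finset.mem_filter.2 ⟨hm, hσm⟩))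
  exact hmτ₀ ▸ meetSeq_comm τ τ₀ ▸ meetSeq_seqLE_left τ τ₀

lemma PValid.exists_le_insert_leaf (hT : PAmbientOK Tc) (hp : PValid Tc p) {σ : Sseq}
    (hσT : σ ∈ Tc) (hσu : σ ∉ p.u) (hmeet : ∀ τ ∈ p.u, meetSeq σ τ ∈ insert σ p.u)
    (hleaf : ∀ τ ∈ p.u, ¬ seqLT σ τ) :
    ∃ q, PValid Tc q ∧ PLe p q ∧ q.u = insert σ p.u := by
  have hu (τ) (hτ : τ ∈ p.u) : IsSeqOK τ := hp.isSeqOK hT hτ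
  have hσ := hT.isSeqOK hσT
  obtain ⟨τ₁, hτ₁, hτ₁σ, hmax⟩ := exists_maximal_seqLT hu
    ⟨emptySeq, hp.u_root, emptySeq_seqLT fun h : σ = emptySeq => hσu (h ▸ hp.u_root)⟩
  obtain ⟨d, hd⟩ := hp.exists_f_eq_some hτ₁
  have hdv := hp.f_ran τ₁ d hd
  have hd_ht : htOf d < lg σ := hp.f_ht τ₁ d hd ▸ lg_lt_lg_of_seqLT (hu τ₁ hτ₁) hσ hτ₁σ
  refine hp.exists_le_insert_between hσT hσu hmeet hσ.lg_lt_omega1 (D := {x | x = d ∨ p.lt x d})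
    (U := ∅) ?_ (Set.empty_subset _) ?_ (fun _ _ h => h.elim) (fun _ _ _ h => h.elim) ?_
    (fun _ h => h.elim) ?_ (fun _ h => h.elim) ?_ (fun τ hτ hστ => (hleaf τ hτ hστ).elim)
  · rintro x (rfl | hx)
    exacts [hdv, (hp.lt_dom x d hx).1]
  · rintro x y hxy (rfl | hy)
    exacts [Or.inr hxy, Or.inr (hp.lt_trans x y d hxy hy)]
  · rintro x (rfl | hx)
    exacts [hd_ht, (hp.lt_ht x d hx).trans hd_ht]
  · rintro x (rfl | hx) y (rfl | hy)
    · exact Or.inr (Or.inr rfl)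
    · exact Or.inr (Or.inl hy)
    · exact Or.inl hx
    · exact hp.lt_pred_linear x y d hx hy
  · intro ρ hρ hρσ b hb
    rcases eq_or_ne ρ τ₁ with rfl | hne
    · exact Or.inl (Option.some_inj.1 (hb.symm.trans hd))
    · exact Or.inr (hp.f_mono ρ hρ τ₁ hτ₁ ⟨hmax ρ hρ hρσ, hne⟩ b d hb hd)

section BelowPoint

variable {σ : Sseq} {b₀ : omega1.{0}.ToType}

lemma PValid.exists_le_insert_pred (hp : PValid Tc p) (hσT : σ ∈ Tc) (hσu : σ ∉ p.u)
    (hmeet : ∀ τ ∈ p.u, meetSeq σ τ ∈ insert σ p.u)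
    (hbelow : ∀ ρ ∈ p.u, seqLT ρ σ → ∀ b, p.f ρ = some b → p.lt b b₀ ∧ htOf b < lg σ)
    (habove : ∀ τ ∈ p.u, seqLT σ τ → ∀ b, p.f τ = some b → b₀ = b ∨ p.lt b₀ b)
    {c : omega1.{0}.ToType} (hc : p.lt c b₀) (hc_ht : htOf c = lg σ) :
    ∃ q, PValid Tc q ∧ PLe p q ∧ q.u = insert σ p.u := by
  refine hp.exists_le_insert hσT hσu hmeet (a := c)
    (by rw [Finset.insert_eq_of_mem (hp.lt_dom c b₀ hc).1]; exact hp.colouredOrder)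
    (fun _ _ h => h) (fun _ _ h => h) hc_ht (fun ρ hρ hρσ b hb => ?_) (fun τ hτ hστ b hb => ?_)
  · obtain ⟨hbb₀, hb_ht⟩ := hbelow ρ hρ hρσ b hb
    rcases hp.lt_pred_linear b c b₀ hbb₀ hc with h | h | rfl
    · exact h
    · exact absurd (hp.lt_ht c b h) (hc_ht ▸ hb_ht).not_gt
    · exact absurd hc_ht hb_ht.ne
  · rcases habove τ hτ hστ b hb with rfl | h
    exacts [hc, hp.lt_trans c b₀ b hc h]

lemma PValid.exists_le_insert_fresh (hp : PValid Tc p) (hσT : σ ∈ Tc) (hσu : σ ∉ p.u)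
    (hmeet : ∀ τ ∈ p.u, meetSeq σ τ ∈ insert σ p.u) (hσ : lg σ < omega1)
    (hb₀ : b₀ ∈ p.v) (hσb₀ : lg σ < htOf b₀)
    (hbelow : ∀ ρ ∈ p.u, seqLT ρ σ → ∀ b, p.f ρ = some b → p.lt b b₀ ∧ htOf b < lg σ)
    (habove : ∀ τ ∈ p.u, seqLT σ τ → ∀ b, p.f τ = some b → b₀ = b ∨ p.lt b₀ b)
    (hno : ∀ c, p.lt c b₀ → htOf c ≠ lg σ) :
    ∃ q, PValid Tc q ∧ PLe p q ∧ q.u = insert σ p.u := by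
  let D := {x | p.lt x b₀ ∧ htOf x < lg σ}
  let U := {y | ∃ w, (w = b₀ ∨ p.lt w b₀) ∧ lg σ < htOf w ∧ (w = y ∨ p.lt w y)}
  have hU_ht : ∀ y ∈ U, lg σ < htOf y := by
    rintro y ⟨w, -, hw, rfl | hwy⟩
    exacts [hw, hw.trans (hp.lt_ht w y hwy)]
  have hDU : ∀ x ∈ D, ∀ z ∈ U, p.lt x z := by
    rintro x hx z ⟨w, hw, hw_ht, hwz⟩
    have hxw : p.lt x w := by
      rcases hw with rfl | hw
      · exact hx.1
      · rcases hp.lt_pred_linear x w b₀ hx.1 hw with h | h | rfl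
        · exact h
        · exact absurd ((hp.lt_ht w x h).trans hx.2) hw_ht.not_gt
        · exact absurd hx.2 hw_ht.not_gt
    rcases hwz with rfl | hwz
    exacts [hxw, hp.lt_trans x w z hxw hwz]
  -- `hno` puts every predecessor of a point of `U` on one side of the fresh point.
  have hU_pred : ∀ z ∈ U, ∀ x, p.lt x z → x ∈ D ∨ x ∈ U := by
    rintro z ⟨w, hw, hw_ht, hwz⟩ x hxz
    have hxb₀ (hx : p.lt x b₀) : x ∈ D ∨ x ∈ U := by
      rcases lt_trichotomy (htOf x) (lg σ) with h | h | h
      exacts [Or.inl ⟨hx, h⟩, absurd h (hno x hx), Or.inr ⟨x, Or.inr hx, h, Or.inl rfl⟩]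
    have hxw : p.lt x w ∨ w = x ∨ p.lt w x := by
      rcases hwz with rfl | hwz
      · exact Or.inl hxz
      · rcases hp.lt_pred_linear x w z hxz hwz with h | h | h
        exacts [Or.inl h, Or.inr (Or.inr h), Or.inr (Or.inl h.symm)]
    rcases hxw with hxw | rfl | hwx
    · rcases hw with rfl | hw
      exacts [hxb₀ hxw, hxb₀ (hp.lt_trans x w b₀ hxw hw)]
    · exact Or.inr ⟨w, hw, hw_ht, Or.inl rfl⟩
    · exact Or.inr ⟨w, hw, hw_ht, Or.inr hwx⟩
  refine hp.exists_le_insert_between hσT hσu hmeet hσ (D := D) (U := U)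
    (fun x hx => (hp.lt_dom x b₀ hx.1).1) ?_
    (fun x y hxy hy => ⟨hp.lt_trans x y b₀ hxy hy.1, (hp.lt_ht x y hxy).trans hy.2⟩) ?_ hDU
    (fun x hx => hx.2) hU_ht (fun x hx y hy => hp.lt_pred_linear x y b₀ hx.1 hy.1) hU_pred
    (fun ρ hρ hρσ b hb => hbelow ρ hρ hρσ b hb)
    (fun τ hτ hστ b hb => ⟨b₀, Or.inl rfl, hσb₀, habove τ hτ hστ b hb⟩)
  · rintro y ⟨w, hw, -, rfl | hwy⟩
    · rcases hw with rfl | hw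
      exacts [hb₀, (hp.lt_dom w b₀ hw).1]
    · exact (hp.lt_dom w y hwy).2
  · rintro y z ⟨w, hw, hw_ht, rfl | hwy⟩ hyz
    exacts [⟨w, hw, hw_ht, Or.inr hyz⟩, ⟨w, hw, hw_ht, Or.inr (hp.lt_trans w y z hwy hyz)⟩]

end BelowPoint

lemma PValid.exists_le_insert_of_seqLT (hT : PAmbientOK Tc) (hp : PValid Tc p) {σ : Sseq}
    (hσT : σ ∈ Tc) (hσu : σ ∉ p.u) (hmeet : ∀ τ ∈ p.u, meetSeq σ τ ∈ insert σ p.u)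
    (hext : ∃ τ ∈ p.u, seqLT σ τ) :
    ∃ q, PValid Tc q ∧ PLe p q ∧ q.u = insert σ p.u := by
  have hu (τ) (hτ : τ ∈ p.u) : IsSeqOK τ := hp.isSeqOK hT hτ
  have hσ := hT.isSeqOK hσT
  obtain ⟨τ₀, hτ₀, hστ₀, hmin⟩ := exists_minimal_seqLT hu hp.u_meet hσ hσu hext
  obtain ⟨b₀, hb₀⟩ := hp.exists_f_eq_some hτ₀
  have hbelow (ρ) (hρ : ρ ∈ p.u) (hρσ : seqLT ρ σ) (b) (hb : p.f ρ = some b) :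
      p.lt b b₀ ∧ htOf b < lg σ :=
    ⟨hp.f_mono ρ hρ τ₀ hτ₀ (seqLT_of_seqLT_of_seqLE hρσ hστ₀.1) b b₀ hb hb₀,
      hp.f_ht ρ b hb ▸ lg_lt_lg_of_seqLT (hu ρ hρ) hσ hρσ⟩
  have habove (τ) (hτ : τ ∈ p.u) (hστ : seqLT σ τ) (b) (hb : p.f τ = some b) :
      b₀ = b ∨ p.lt b₀ b := by
    rcases eq_or_ne τ₀ τ with rfl | hne
    · exact Or.inl (Option.some_inj.1 (hb₀.symm.trans hb))
    · exact Or.inr (hp.f_mono τ₀ hτ₀ τ hτ ⟨hmin τ hτ hστ, hne⟩ b₀ b hb₀ hb)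
  by_cases hreuse : ∃ c, p.lt c b₀ ∧ htOf c = lg σ
  · obtain ⟨c, hc, hc_ht⟩ := hreuse
    exact hp.exists_le_insert_pred hσT hσu hmeet hbelow habove hc hc_ht
  · push Not at hreuse
    exact hp.exists_le_insert_fresh hσT hσu hmeet hσ.lg_lt_omega1 (hp.f_ran τ₀ b₀ hb₀)
      (hp.f_ht τ₀ b₀ hb₀ ▸ lg_lt_lg_of_seqLT hσ (hu τ₀ hτ₀) hστ₀) hbelow habove hreuse

lemma PValid.exists_le_insert_node (hT : PAmbientOK Tc) (hp : PValid Tc p) {σ : Sseq}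
    (hσT : σ ∈ Tc) (hσu : σ ∉ p.u) (hmeet : ∀ τ ∈ p.u, meetSeq σ τ ∈ insert σ p.u) :
    ∃ q, PValid Tc q ∧ PLe p q ∧ q.u = insert σ p.u := by
  by_cases hext : ∃ τ ∈ p.u, seqLT σ τ
  · exact hp.exists_le_insert_of_seqLT hT hσT hσu hmeet hext
  · push Not at hext
    exact hp.exists_le_insert_leaf hT hσT hσu hmeet hext

end Extension

section Density

/-- The nodes to be added to `u` so that it contains `ρ` and stays closed under meets. -/
noncomputable def pendingSeqs (ρ : Sseq) (u : Finset Sseq) : Finset Sseq :=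
  insert ρ (u.image (meetSeq ρ)) \ u

variable {ρ σ : Sseq} {u : Finset Sseq}

lemma IsSeqOK.exists_restrict_of_mem_pendingSeqs (hρ : IsSeqOK ρ) (hσ : σ ∈ pendingSeqs ρ u) :
    ∃ b, σ = restrictSeq ρ b := by
  obtain ⟨τ, rfl⟩ : ∃ τ, σ = meetSeq ρ τ := by
    rcases Finset.mem_insert.1 (Finset.mem_sdiff.1 hσ).1 with rfl | hσ
    · exact ⟨σ, (meetSeq_self σ).symm⟩
    · obtain ⟨τ, -, rfl⟩ := Finset.mem_image.1 hσ
      exact ⟨τ, rfl⟩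
  exact hρ.meet_eq_restrict τ

lemma meetSeq_mem_insert_of_pendingSeqs (hρ : IsSeqOK ρ) (hσ : σ ∈ pendingSeqs ρ u)
    (hmin : ∀ χ ∈ pendingSeqs ρ u, lg σ ≤ lg χ) : ∀ τ ∈ u, meetSeq σ τ ∈ insert σ u := by
  intro τ hτ
  obtain ⟨b, hσb⟩ := hρ.exists_restrict_of_mem_pendingSeqs hσ
  have hσρ : seqLE σ ρ := hσb ▸ restrictSeq_seqLE ρ b
  have hσ' : IsSeqOK σ := hσb ▸ hρ.restrict b
  have hm := hρ.meet τ
  have hmτ : seqLE (meetSeq ρ τ) τ := meetSeq_comm τ ρ ▸ meetSeq_seqLE_left τ ρ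
  -- `σ ∧ τ` is `σ` or `ρ ∧ τ`; in the latter case `ρ ∧ τ` is shorter than `σ`, so not pending.
  rcases le_or_gt (lg σ) (lg (meetSeq ρ τ)) with hle | hlt
  · have hστ := seqLE_trans (seqLE_of_lg_le hσ' hm hσρ (meetSeq_seqLE_left ρ τ) hle) hmτ
    rw [meetSeq_eq_left hσ' hστ]
    exact Finset.mem_insert_self σ u
  · have hmσ := seqLE_of_lg_le hm hσ' (meetSeq_seqLE_left ρ τ) hσρ hlt.le
    have heq : meetSeq σ τ = meetSeq ρ τ := seqLE_antisymm
      (seqLE_meetSeq (hσ'.meet τ) (seqLE_trans (meetSeq_seqLE_left σ τ) hσρ)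
        (meetSeq_comm τ σ ▸ meetSeq_seqLE_left τ σ))
      (seqLE_meetSeq hm hmσ hmτ)
    rw [heq]
    by_contra hmu
    have hmp : meetSeq ρ τ ∈ pendingSeqs ρ u := Finset.mem_sdiff.2
      ⟨Finset.mem_insert_of_mem (Finset.mem_image_of_mem _ hτ),
        fun h => hmu (Finset.mem_insert_of_mem h)⟩
    exact (hmin _ hmp).not_gt hlt

lemma pendingSeqs_insert_subset (hσ : IsSeqOK σ) (hσρ : seqLE σ ρ) :
    pendingSeqs ρ (insert σ u) ⊆ (pendingSeqs ρ u).erase σ := by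
  intro χ hχ
  obtain ⟨hχ, hχu⟩ := Finset.mem_sdiff.1 hχ
  have hχσ : χ ≠ σ := fun h => hχu (h ▸ Finset.mem_insert_self σ u)
  refine Finset.mem_erase.2
    ⟨hχσ, Finset.mem_sdiff.2 ⟨?_, fun h => hχu (Finset.mem_insert_of_mem h)⟩⟩
  rcases Finset.mem_insert.1 hχ with rfl | hχ
  · exact Finset.mem_insert_self χ _
  · obtain ⟨τ, hτ, rfl⟩ := Finset.mem_image.1 hχ
    rcases Finset.mem_insert.1 hτ with rfl | hτ
    · exact absurd (meetSeq_comm ρ τ ▸ meetSeq_eq_left hσ hσρ) hχσ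
    · exact Finset.mem_insert_of_mem (Finset.mem_image_of_mem _ hτ)

lemma PValid.exists_le_mem_u {Tc : Set Sseq} (hT : PAmbientOK Tc) (hρT : ρ ∈ Tc) {p : PCond}
    (hp : PValid Tc p) : ∃ q, PValid Tc q ∧ PLe p q ∧ ρ ∈ q.u := by
  induction hn : (pendingSeqs ρ p.u).card using Nat.strong_induction_on generalizing p with
  | _ n ih =>
  by_cases hρu : ρ ∈ p.u
  · exact ⟨p, hp, PLe.refl p, hρu⟩
  obtain ⟨σ, hσ, hmin⟩ := Finset.exists_min_image (pendingSeqs ρ p.u) lg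
    ⟨ρ, by simp [pendingSeqs, hρu]⟩
  have hρ := hT.isSeqOK hρT
  have hmeet := meetSeq_mem_insert_of_pendingSeqs hρ hσ hmin
  obtain ⟨b, rfl⟩ := hρ.exists_restrict_of_mem_pendingSeqs hσ
  obtain ⟨q, hq, hpq, hqu⟩ :=
    hp.exists_le_insert_node hT (hT.restrictSeq_mem hρT b) (Finset.mem_sdiff.1 hσ).2 hmeet
  have hcard : (pendingSeqs ρ q.u).card < n := by
    rw [← hn, hqu]
    exact (Finset.card_le_card (pendingSeqs_insert_subset (hρ.restrict b)
      (restrictSeq_seqLE ρ b))).trans_lt (Finset.card_erase_lt_of_mem hσ)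
  obtain ⟨r, hr, hqr, hρr⟩ := ih _ hcard hq rfl
  exact ⟨r, hr, hpq.trans hqr, hρr⟩

end Density

section OrderType

lemma relHeight_eq_of_forall_exists {X : Type u} {lt : X → X → Prop} {x : X}
    (h : X → Ordinal.{u}) (hmono : ∀ y z, lt y z → h y < h z)
    (hlin : ∀ y z, lt y x → lt z x → lt y z ∨ lt z y ∨ y = z)
    (hsurj : ∀ β < h x, ∃ y, lt y x ∧ h y = β) : relHeight lt x = h x := by
  let φ : {y // lt y x} → Set.Iio (h x) := fun y => ⟨h y.1, hmono _ _ y.2⟩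
  have hφ (y z : {y // lt y x}) : φ y < φ z ↔ lt y.1 z.1 := by
    refine ⟨fun hyz => ?_, hmono _ _⟩
    rcases hlin y.1 z.1 y.2 z.2 with hlt | hlt | heq
    · exact hlt
    · exact absurd (hmono _ _ hlt) (not_lt_of_gt hyz)
    · exact absurd (Subtype.ext heq ▸ hyz) (lt_irrefl _)
  have hφ_inj : Function.Injective φ := fun y z hyz => by
    rcases hlin y.1 z.1 y.2 z.2 with hlt | hlt | heq
    · exact absurd ((hφ y z).2 hlt) (hyz ▸ lt_irrefl _)
    · exact absurd ((hφ z y).2 hlt) (hyz ▸ lt_irrefl _)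
    · exact Subtype.ext heq
  have hφ_surj : Function.Surjective φ := fun β => by
    obtain ⟨y, hy, hyβ⟩ := hsurj β β.2
    exact ⟨⟨y, hy⟩, Subtype.ext hyβ⟩
  let e₀ : (fun a b : {y // lt y x} => lt a.1 b.1) ≃r ((· < ·) : Set.Iio (h x) → _ → Prop) :=
    ⟨Equiv.ofBijective φ ⟨hφ_inj, hφ_surj⟩, hφ _ _⟩
  let e : (fun a b : {y // lt y x} => lt a.1 b.1) ≃r ((· < ·) : (h x).ToType → _ → Prop) :=
    e₀.trans Ordinal.ToType.mk.toRelIsoLT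
  have hwo : IsWellOrder {y // lt y x} (fun a b => lt a.1 b.1) := e.toRelEmbedding.isWellOrder
  rw [relHeight, dif_pos hwo]
  exact (Ordinal.type_eq.2 ⟨e⟩).trans (Ordinal.type_toType _)

lemma countable_of_colouring {X : Type*} {lt : X → X → Prop} {C : Set X} (col : X → ℕ)
    (hcol : ∀ x ∈ C, ∀ y ∈ C, lt x y → col x ≠ col y)
    (hC : ∀ x ∈ C, ∀ y ∈ C, x ≠ y → lt x y ∨ lt y x) : C.Countable :=
  Set.countable_iff_exists_injOn.2 ⟨col, fun x hx y hy hxy => by_contra fun hne =>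
    (hC x hx y hy hne).elim (fun h => hcol x hx y hy h hxy) (fun h => hcol y hy x hx h hxy.symm)⟩

end OrderType

section Generic

variable {Tc : Set Sseq}

/-- The order `<*` induced by a set of conditions. -/
def genericLt (G : Set {p : PCond // PValid Tc p}) (a b : omega1.{0}.ToType) : Prop :=
  ∃ p ∈ G, p.1.lt a b

/-- The underlying set `V` of the tree induced by a set of conditions. -/
def genericV (G : Set {p : PCond // PValid Tc p}) : Set omega1.{0}.ToType :=
  {a | ∃ p ∈ G, a ∈ p.1.v}

variable {G : Set {p : PCond // PValid Tc p}} {a b : omega1.{0}.ToType}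

lemma genericLt.htOf_lt (h : genericLt G a b) : htOf a < htOf b := by
  obtain ⟨p, -, hp⟩ := h
  exact p.2.lt_ht a b hp

lemma genericLt.mem (h : genericLt G a b) : a ∈ genericV G ∧ b ∈ genericV G := by
  obtain ⟨p, hpG, hp⟩ := h
  exact ⟨⟨p, hpG, (p.2.lt_dom a b hp).1⟩, ⟨p, hpG, (p.2.lt_dom a b hp).2⟩⟩

lemma genericLt_trans (hG : DirectedOn (fun p q => PLe p.1 q.1) G) {c : omega1.{0}.ToType}
    (hab : genericLt G a b) (hbc : genericLt G b c) : genericLt G a c := by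
  obtain ⟨p, hpG, hp⟩ := hab
  obtain ⟨q, hqG, hq⟩ := hbc
  obtain ⟨s, hsG, hps, hqs⟩ := hG p hpG q hqG
  exact ⟨s, hsG, s.2.lt_trans a b c (hps.lt hp) (hqs.lt hq)⟩

lemma genericLt_pred_linear (hG : DirectedOn (fun p q => PLe p.1 q.1) G) {c : omega1.{0}.ToType}
    (hac : genericLt G a c) (hbc : genericLt G b c) :
    genericLt G a b ∨ genericLt G b a ∨ a = b := by
  obtain ⟨p, hpG, hp⟩ := hac
  obtain ⟨q, hqG, hq⟩ := hbc
  obtain ⟨s, hsG, hps, hqs⟩ := hG p hpG q hqG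
  exact (s.2.lt_pred_linear a b c (hps.lt hp) (hqs.lt hq)).imp
    (fun h => ⟨s, hsG, h⟩) (Or.imp_left fun h => ⟨s, hsG, h⟩)

lemma treeOrderOn_genericLt (hG : DirectedOn (fun p q => PLe p.1 q.1) G) :
    TreeOrderOn (genericV G) (genericLt G) :=
  ⟨⟨fun _ _ h => h.mem, fun _ h => h.htOf_lt.false, fun _ _ _ => genericLt_trans hG⟩,
    fun _ _ _ _ => genericLt_pred_linear hG,
    fun _ _ => (InvImage.wf (fun y : {y | genericLt G y _} => htOf y.1) Ordinal.lt_wf).mono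
      fun _ _ h => h.htOf_lt⟩

lemma genericLt_of_seqLT (hG : DirectedOn (fun p q => PLe p.1 q.1) G) {ρ τ : Sseq}
    (hρτ : seqLT ρ τ) (ha : ∃ p ∈ G, p.1.f ρ = some a) (hb : ∃ q ∈ G, q.1.f τ = some b) :
    genericLt G a b := by
  obtain ⟨p, hpG, hp⟩ := ha
  obtain ⟨q, hqG, hq⟩ := hb
  obtain ⟨s, hsG, hps, hqs⟩ := hG p hpG q hqG
  have hsa := hps.f_eq hp
  have hsb := hqs.f_eq hq
  exact ⟨s, hsG, s.2.f_mono ρ (s.2.mem_u_of_f_eq_some hsa) τ (s.2.mem_u_of_f_eq_some hsb) hρτ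
    a b hsa hsb⟩

lemma exists_generic_f_eq_some (hcover : ∀ ρ ∈ Tc, ∃ p ∈ G, ρ ∈ p.1.u) {ρ : Sseq} (hρ : ρ ∈ Tc) :
    ∃ a, (∃ p ∈ G, p.1.f ρ = some a) ∧ a ∈ genericV G ∧ htOf a = lg ρ := by
  obtain ⟨p, hpG, hρp⟩ := hcover ρ hρ
  obtain ⟨a, ha⟩ := p.2.exists_f_eq_some hρp
  exact ⟨a, ⟨p, hpG, ha⟩, ⟨p, hpG, p.2.f_ran ρ a ha⟩, p.2.f_ht ρ a ha⟩

/-- Every point `f(ρ)` has the predecessors `f(ρ ↾ β)`, one at each height `β < lg ρ`. -/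
lemma exists_genericLt_htOf_eq (hT : PAmbientOK Tc)
    (hG : DirectedOn (fun p q => PLe p.1 q.1) G) (hcover : ∀ ρ ∈ Tc, ∃ p ∈ G, ρ ∈ p.1.u)
    (ha : a ∈ genericV G) {β : Ordinal.{0}} (hβ : β < htOf a) :
    ∃ c, genericLt G c a ∧ htOf c = β := by
  obtain ⟨p, hpG, hav⟩ := ha
  obtain ⟨ρ, hρu, hρa⟩ := p.2.f_surj a hav
  have hρT := p.2.u_sub ρ hρu
  have hρ := hT.isSeqOK hρT
  obtain ⟨b, rfl⟩ := exists_oVal_eq (hβ.trans (htOf_lt_omega1 a))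
  have hlg : oVal b < lg ρ := p.2.f_ht ρ a hρa ▸ hβ
  obtain ⟨c, hc, -, hc_ht⟩ := exists_generic_f_eq_some hcover (hT.restrictSeq_mem hρT b)
  refine ⟨c, genericLt_of_seqLT hG ⟨restrictSeq_seqLE ρ b, fun h => ?_⟩ hc ⟨p, hpG, hρa⟩, ?_⟩
  · exact hlg.ne (h ▸ hρ.lg_restrict hlg.le).symm
  · rw [hc_ht, hρ.lg_restrict hlg.le]

lemma relHeight_genericLt (hT : PAmbientOK Tc) (hG : DirectedOn (fun p q => PLe p.1 q.1) G)
    (hcover : ∀ ρ ∈ Tc, ∃ p ∈ G, ρ ∈ p.1.u) (ha : a ∈ genericV G) :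
    relHeight (genericLt G) a = htOf a :=
  relHeight_eq_of_forall_exists htOf (fun _ _ h => h.htOf_lt)
    (fun _ _ => genericLt_pred_linear hG)
    (fun _ hβ => exists_genericLt_htOf_eq hT hG hcover ha hβ)

/-- The colourings `cᵖ` of the conditions in `G` combine to one separating comparable points. -/
lemma countable_of_chain_genericLt (hG : DirectedOn (fun p q => PLe p.1 q.1) G)
    {C : Set omega1.{0}.ToType} (hCV : C ⊆ genericV G)
    (hC : ∀ x ∈ C, ∀ y ∈ C, x ≠ y → genericLt G x y ∨ genericLt G y x) : C.Countable := by
  have hcol (x) (hx : x ∈ genericV G) : ∃ n, ∃ p ∈ G, p.1.c x = some n := by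
    obtain ⟨p, hpG, hxp⟩ := hx
    obtain ⟨n, hn⟩ := Option.ne_none_iff_exists'.1 ((p.2.c_dom x).2 hxp)
    exact ⟨n, p, hpG, hn⟩
  choose! col hcol using hcol
  refine countable_of_colouring col (fun x hx y hy ⟨r, hrG, hr⟩ hxy => ?_) hC
  obtain ⟨p, hpG, hp⟩ := hcol x (hCV hx)
  obtain ⟨q, hqG, hq⟩ := hcol y (hCV hy)
  obtain ⟨s₁, hs₁G, hps₁, hqs₁⟩ := hG p hpG q hqG
  obtain ⟨s, hsG, hs₁s, hrs⟩ := hG s₁ hs₁G r hrG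
  refine s.2.c_spec x y (hrs.lt hr) ?_
  rw [(hps₁.trans hs₁s).c_eq hp, (hqs₁.trans hs₁s).c_eq hq, hxy]

lemma aronszajnOn_genericLt (hT : PAmbientOK Tc)
    (hht : ∀ α : Ordinal.{0}, α < omega1.{0} → ∃ ρ ∈ Tc, lg ρ = α)
    (hG : DirectedOn (fun p q => PLe p.1 q.1) G) (hcover : ∀ ρ ∈ Tc, ∃ p ∈ G, ρ ∈ p.1.u) :
    AronszajnOn (genericV G) (genericLt G) := by
  refine ⟨treeOrderOn_genericLt hG, fun α hα => ?_, fun x hx => ?_, fun α => ?_,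
    fun C hCV hC => countable_of_chain_genericLt hG hCV hC⟩
  · obtain ⟨ρ, hρT, rfl⟩ := hht α hα
    obtain ⟨a, -, ha, ha_ht⟩ := exists_generic_f_eq_some hcover hρT
    exact ⟨a, ha, (relHeight_genericLt hT hG hcover ha).trans ha_ht⟩
  · exact relHeight_genericLt hT hG hcover hx ▸ htOf_lt_omega1 x
  · refine (countable_setOf_htOf_eq α).mono fun x hx => ?_
    exact (relHeight_genericLt hT hG hcover hx.1).symm.trans hx.2

end Generic

/-- There is a family of `ℵ₁` many dense subsets of `P(T)` such that for every filter
meeting all of them: the union of the orders of conditions in the filter makes the union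
of the `vᵖ` into an Aronszajn tree `T*`, and the union of the `fᵖ` is a weak embedding of
`T` into `T*` with `ht (f ρ) = lg ρ` for every `ρ ∈ T`. -/
theorem PCond_generic (Tc : Set Sseq) (hT : PAmbientOK Tc)
    (hht : ∀ α : Ordinal.{0}, α < omega1.{0} → ∃ ρ ∈ Tc, lg ρ = α) :
    ∃ H : Set (Set {p : PCond // PValid Tc p}),
      Cardinal.mk H ≤ Cardinal.aleph.{0} 1 ∧
      (∀ D ∈ H, ∀ p : {p : PCond // PValid Tc p}, ∃ q ∈ D, PLe p.1 q.1) ∧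
      ∀ G : Set {p : PCond // PValid Tc p},
        (∀ p ∈ G, ∀ q ∈ G, ∃ s ∈ G, PLe p.1 s.1 ∧ PLe q.1 s.1) →
        (∀ p ∈ G, ∀ q : {p : PCond // PValid Tc p}, PLe q.1 p.1 → q ∈ G) →
        (∀ D ∈ H, (G ∩ D).Nonempty) →
        ∀ ltStar : omega1.{0}.ToType → omega1.{0}.ToType → Prop,
          (∀ a b, ltStar a b ↔ ∃ p ∈ G, (p : {p : PCond // _}).1.lt a b) →
          ∀ V : Set omega1.{0}.ToType, V = {a | ∃ p ∈ G, a ∈ (p : {p : PCond // _}).1.v} →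
          ∀ fStar : Sseq → Option omega1.{0}.ToType,
            (∀ ρ a, fStar ρ = some a ↔ ∃ p ∈ G, (p : {p : PCond // _}).1.f ρ = some a) →
            AronszajnOn V ltStar ∧
            (∀ ρ ∈ Tc, ∃ a, fStar ρ = some a ∧ a ∈ V ∧ relHeight ltStar a = lg ρ) ∧
            ∀ ρ ∈ Tc, ∀ τ ∈ Tc, seqLT ρ τ →
              ∀ a b, fStar ρ = some a → fStar τ = some b → ltStar a b := by
  refine ⟨(fun ρ => {q | ρ ∈ q.1.u}) '' Tc, Cardinal.mk_image_le.trans hT.2.2.2.1.le, ?_, ?_⟩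
  · rintro _ ⟨ρ, hρT, rfl⟩ p
    obtain ⟨q, hq, hpq, hρq⟩ := p.2.exists_le_mem_u hT hρT
    exact ⟨⟨q, hq⟩, hρq, hpq⟩
  intro G hG _ hmeets ltStar hlt V hV fStar hf
  obtain rfl : ltStar = genericLt G := funext₂ fun a b => propext (hlt a b)
  obtain rfl : V = genericV G := hV
  have hcover (ρ) (hρ : ρ ∈ Tc) : ∃ p ∈ G, ρ ∈ p.1.u := hmeets _ ⟨ρ, hρ, rfl⟩
  refine ⟨aronszajnOn_genericLt hT hht hG hcover, fun ρ hρ => ?_,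
    fun ρ _ τ _ hρτ a b ha hb => genericLt_of_seqLT hG hρτ ((hf ρ a).1 ha) ((hf τ b).1 hb)⟩
  obtain ⟨a, ha, haV, ha_ht⟩ := exists_generic_f_eq_some hcover hρ
  exact ⟨a, (hf ρ a).2 ha, haV, (relHeight_genericLt hT hG hcover haV).trans ha_ht⟩
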